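/- Let G = (V, E) be a finite bipartite multigraph. Then the number of distinct degree sequences of spanning subgraphs of G equals T_G(2,1), the Tutte polynomial of G evaluated at (2,1). -/

import Mathlib

open Finset

variable {V E : Type*}

/-- Number of connected components of the multigraph on vertex set `V`
with edges `A ⊆ E`, where `ends e` gives the (unordered) endpoints of `e`. -/
noncomputable def numComponents (ends : E → Sym2 V) (A : Finset E) : ℕ :=
  Nat.card (SimpleGraph.fromRel fun x y => ∃ e ∈ A, ends e = s(x, y)).ConnectedComponent

/-- The spanning subgraph `(V, A)` of the multigraph is a forest:
no loops, no parallel edges, and the underlying simple graph is acyclic. -/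
def IsForestEdges (ends : E → Sym2 V) (A : Finset E) : Prop :=
  (∀ e ∈ A, ¬ (ends e).IsDiag) ∧ Set.InjOn ends ↑A ∧
    (SimpleGraph.fromRel fun x y => ∃ e ∈ A, ends e = s(x, y)).IsAcyclic

/-- Subset-expansion evaluation of the Tutte polynomial of the multigraph. -/
noncomputable def tutteEval [Fintype V] [Fintype E] [DecidableEq E]
    (ends : E → Sym2 V) (x y : ℤ) : ℤ :=
  ∑ A : Finset E,
    (x - 1) ^ (numComponents ends A - numComponents ends Finset.univ) *
      (y - 1) ^ (numComponents ends A + A.card - Fintype.card V)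

/-- Tail of edge `e` under the orientation `σ` (edges carry a reference
direction `src e → tgt e`; `σ e = true` means the edge is flipped). -/
def otail (src tgt : E → V) (σ : E → Bool) (e : E) : V :=
  if σ e then tgt e else src e

/-- Head of edge `e` under the orientation `σ`. -/
def ohead (src tgt : E → V) (σ : E → Bool) (e : E) : V :=
  if σ e then src e else tgt e

/-- Outdegree of `v` under the orientation `σ`. -/
def outdeg [Fintype E] [DecidableEq V] (src tgt : E → V) (σ : E → Bool) (v : V) : ℕ :=
  (Finset.univ.filter fun e => otail src tgt σ e = v).card

/-- Indegree of `v` under the orientation `σ`. -/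
def indeg [Fintype E] [DecidableEq V] (src tgt : E → V) (σ : E → Bool) (v : V) : ℕ :=
  (Finset.univ.filter fun e => ohead src tgt σ e = v).card

/-- Score of `v` under the orientation `σ`: outdegree minus indegree. -/
def score [Fintype E] [DecidableEq V] (src tgt : E → V) (σ : E → Bool) (v : V) : ℤ :=
  (outdeg src tgt σ v : ℤ) - (indeg src tgt σ v : ℤ)

/-- Score of `v` in the spanning subdigraph of `G_σ` with arc set `F`. -/
def scoreSub [DecidableEq V] (src tgt : E → V) (σ : E → Bool) (F : Finset E) (v : V) : ℤ :=
  ((F.filter fun e => otail src tgt σ e = v).card : ℤ) -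
    ((F.filter fun e => ohead src tgt σ e = v).card : ℤ)

/-- Degree of `v` in the spanning subgraph with edge set `F` (loops count twice). -/
def degIn [DecidableEq V] (src tgt : E → V) (F : Finset E) (v : V) : ℕ :=
  (F.filter fun e => src e = v).card + (F.filter fun e => tgt e = v).card

/-- Directed reachability in the digraph `G_σ`. -/
def dirReach (src tgt : E → V) (σ : E → Bool) : V → V → Prop :=
  Relation.ReflTransGen fun x y => ∃ e, otail src tgt σ e = x ∧ ohead src tgt σ e = y

/-!
Orient every edge from `L` to its complement. The degree sequence of a spanning subgraph `F`,
negated off `L`, is then the boundary `∂F = ∑_{e ∈ F} (χ_{src e} - χ_{tgt e})`, so we count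
distinct boundaries. Since `k(A) + rank(A) = |V|` for the rank over `ℚ` of the incidence vectors
of `A`, `T_G(2,1)` counts the edge sets with linearly independent incidence vectors.

Both counts satisfy `f(G) = f(G ∖ e)` for a loop `e` and `f(G) = f(G ∖ e) + f(G / e)` otherwise.
For boundaries: if `N` is the set of boundaries of `G ∖ e` and `d = ∂{e}`, those of `G` form
`N ∪ (N + d)`. Every line in direction `d` meets `N` in an interval (augment along a directed path
in the symmetric difference of two edge sets), so the points `x ∈ N` with `x + d ∉ N` are one per
line, and the projections of these lines along `d` are the boundaries of `G / e`.
-/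

lemma card_union_image_add {M : Type*} [Add M] [IsRightCancelAdd M] [DecidableEq M]
    (N : Finset M) (d : M) :
    #(N ∪ N.image (· + d)) = #N + #{x ∈ N | x + d ∉ N} := by
  have : N.image (· + d) \ N = {x ∈ N | x + d ∉ N}.image (· + d) := by
    ext y
    simp only [mem_sdiff, mem_image, mem_filter]
    grind
  rw [← union_sdiff_self_eq_union, card_union_of_disjoint disjoint_sdiff, this,
    card_image_of_injective _ (add_left_injective d)]

/-- By `hN` each line in direction `d` meets `N` in an interval, whose top point represents the
line. -/
lemma card_filter_add_notMem_eq_card_image {M : Type*} [AddCommGroup M] [DecidableEq M]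
    (N : Finset M) (h : M →+ ℤ) {d : M} (hd : h d = 1)
    (hN : ∀ x ∈ N, ∀ k : ℤ, 0 < k → x + k • d ∈ N → x + d ∈ N) :
    #{x ∈ N | x + d ∉ N} = #(N.image fun x => x - h x • d) := by
  have hfiber (x y : M) (hxy : x - h x • d = y - h y • d) : y = x + (h y - h x) • d := by
    linear_combination (norm := module) -hxy
  refine card_bij (fun x _ => x - h x • d) (fun x hx => mem_image_of_mem _ (mem_filter.mp hx).1)
    (fun x hx y hy hxy => ?_) (fun z hz => ?_)
  · obtain ⟨hxN, hxd⟩ := mem_filter.mp hx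
    obtain ⟨hyN, hyd⟩ := mem_filter.mp hy
    rcases lt_trichotomy (h y - h x) 0 with hk | hk | hk
    · exact absurd (hN y hyN (h x - h y) (by omega) (hfiber y x hxy.symm ▸ hxN)) hyd
    · rw [hfiber x y hxy, hk, zero_smul, add_zero]
    · exact absurd (hN x hxN _ hk (hfiber x y hxy ▸ hyN)) hxd
  · obtain ⟨x, hxN, rfl⟩ := mem_image.mp hz
    obtain ⟨y, hy, hmax⟩ := exists_max_image {y ∈ N | y - h y • d = x - h x • d} h
      ⟨x, mem_filter.mpr ⟨hxN, rfl⟩⟩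
    obtain ⟨hyN, hyx⟩ := mem_filter.mp hy
    refine ⟨y, mem_filter.mpr ⟨hyN, fun hyd => ?_⟩, hyx⟩
    have := hmax (y + d)
      (mem_filter.mpr ⟨hyd, by rw [← hyx, map_add, hd, add_smul, one_smul]; abel⟩)
    rw [map_add, hd] at this
    omega

lemma card_filter_powerset_insert {α : Type*} [DecidableEq α] {s : Finset α} {a : α}
    (ha : a ∉ s) (p : Finset α → Prop) [DecidablePred p] :
    #{t ∈ (insert a s).powerset | p t} =
      #{t ∈ s.powerset | p t} + #{t ∈ s.powerset | p (insert a t)} := by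
  simp only [card_filter, sum_powerset_insert ha]

lemma linearIndepOn_comp_iff_of_ker_eq_span_singleton {K M N ι : Type*} [Field K]
    [AddCommGroup M] [Module K M] [AddCommGroup N] [Module K N] {f : M →ₗ[K] N} {d : M}
    (hd : d ≠ 0) (hker : LinearMap.ker f = K ∙ d) {v : ι → M} {s : Set ι} :
    LinearIndepOn K (f ∘ v) s ↔ LinearIndepOn K v s ∧ d ∉ Submodule.span K (v '' s) := by
  rw [← Submodule.disjoint_span_singleton' hd, ← hker]
  constructor
  · intro h
    refine ⟨h.of_comp f, Submodule.disjoint_def.mpr fun x hx hfx => ?_⟩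
    obtain ⟨l, hl, rfl⟩ := (Finsupp.mem_span_image_iff_linearCombination K).mp hx
    rw [LinearMap.mem_ker, Finsupp.apply_linearCombination] at hfx
    rw [linearIndepOn_iff.mp h l hl hfx, map_zero]
  · rintro ⟨h, hdisj⟩
    exact (f.linearIndepOn_iff_of_injOn (LinearMap.injOn_of_disjoint_ker le_rfl hdisj)).mpr h

section Multigraph

variable {src tgt : E → V}

abbrev spanningGraph (ends : E → Sym2 V) (A : Finset E) : SimpleGraph V :=
  SimpleGraph.fromRel fun x y => ∃ e ∈ A, ends e = s(x, y)

lemma reachable_src_tgt_of_mem {A : Finset E} {e : E} (he : e ∈ A) :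
    (spanningGraph (fun e => s(src e, tgt e)) A).Reachable (src e) (tgt e) := by
  by_cases hloop : src e = tgt e
  · rw [hloop]
  · exact ((SimpleGraph.fromRel_adj _ _ _).mpr ⟨hloop, .inl ⟨e, he, rfl⟩⟩).reachable

lemma eq_of_reachable_spanningGraph {R : Type*} {A : Finset E} {φ : V → R}
    (hφ : ∀ e ∈ A, φ (src e) = φ (tgt e)) {x y : V}
    (h : (spanningGraph (fun e => s(src e, tgt e)) A).Reachable x y) : φ x = φ y := by
  obtain ⟨p⟩ := h
  induction p with
  | nil => rfl
  | cons hadj _ ih =>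
    rw [← ih]
    obtain ⟨-, ⟨e, he, hxy⟩ | ⟨e, he, hxy⟩⟩ := hadj
    all_goals rcases Sym2.eq_iff.mp hxy with ⟨rfl, rfl⟩ | ⟨rfl, rfl⟩
    exacts [hφ e he, (hφ e he).symm, (hφ e he).symm, hφ e he]

variable [DecidableEq V]

def incVec (R : Type*) [Ring R] (src tgt : E → V) (e : E) : V → R :=
  Pi.single (src e) 1 - Pi.single (tgt e) 1

section Rank

variable {A : Finset E}

lemma linearIndepOn_incVec_iff_card_eq_finrank :
    LinearIndepOn ℚ (incVec ℚ src tgt) (A : Set E) ↔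
      #A = (incVec ℚ src tgt '' ↑A).finrank ℚ := by
  rw [LinearIndepOn, linearIndependent_iff_card_eq_finrank_span, Set.image_eq_range]
  simp

lemma finrank_span_incVec_le_card : (incVec ℚ src tgt '' ↑A).finrank ℚ ≤ #A := by
  rw [Set.image_eq_range]
  simpa using finrank_range_le_card (R := ℚ) fun e : (A : Set E) => incVec ℚ src tgt e

variable [Fintype V]

/-- Rank–nullity for the incidence matrix: its kernel consists of the functions constant on
connected components. -/
lemma numComponents_add_finrank_span_incVec :
    numComponents (fun e => s(src e, tgt e)) A + (incVec ℚ src tgt '' ↑A).finrank ℚ =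
      Fintype.card V := by
  set G := spanningGraph (fun e => s(src e, tgt e)) A
  let M : Matrix (A : Set E) V ℚ := fun e => incVec ℚ src tgt e
  have hM (φ : V → ℚ) (e : (A : Set E)) : M.mulVecLin φ e = φ (src e) - φ (tgt e) := by
    change Matrix.mulVec M φ e = _
    simp [M, incVec, Matrix.mulVec, dotProduct, sub_mul, Finset.sum_sub_distrib, Pi.single_apply]
  have hker : LinearMap.ker M.mulVecLin =
      LinearMap.range (LinearMap.funLeft ℚ ℚ G.connectedComponentMk) := by
    ext φ
    simp only [LinearMap.mem_ker, LinearMap.mem_range, funext_iff, Pi.zero_apply, hM,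
      sub_eq_zero, Subtype.forall, Finset.mem_coe]
    constructor
    · intro hφ
      exact ⟨SimpleGraph.ConnectedComponent.lift φ fun x y p _ =>
        eq_of_reachable_spanningGraph hφ p.reachable, fun _ => rfl⟩
    · rintro ⟨g, hg⟩ e he
      simp only [← hg, LinearMap.funLeft_apply]
      exact congrArg g (SimpleGraph.ConnectedComponent.sound (reachable_src_tgt_of_mem he))
  have hinj := LinearMap.funLeft_injective_of_surjective ℚ ℚ G.connectedComponentMk
    Quot.mk_surjective
  have := LinearMap.finrank_range_add_finrank_ker M.mulVecLin
  rw [hker, LinearMap.finrank_range_of_inj hinj, ← Matrix.rank, Matrix.rank_eq_finrank_span_row,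
    Module.finrank_fintype_fun_eq_card, Module.finrank_fintype_fun_eq_card] at this
  rw [numComponents, Nat.card_eq_fintype_card, ← this, add_comm, Set.image_eq_range]
  rfl

open Classical in
lemma tutteEval_two_one_eq_card_linearIndepOn [Fintype E] [DecidableEq E] (src tgt : E → V) :
    tutteEval (fun e => s(src e, tgt e)) 2 1 =
      #{A : Finset E | LinearIndepOn ℚ (incVec ℚ src tgt) (A : Set E)} := by
  rw [tutteEval, Finset.card_filter]
  push_cast
  refine Finset.sum_congr rfl fun A _ => ?_
  have hk := numComponents_add_finrank_span_incVec (src := src) (tgt := tgt) (A := A)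
  have hr := finrank_span_incVec_le_card (src := src) (tgt := tgt) (A := A)
  rw [linearIndepOn_incVec_iff_card_eq_finrank]
  norm_num [zero_pow_eq]
  split_ifs <;> omega

end Rank

section Contraction

variable (R : Type*) [CommRing R] (u w : V)

/-- Contracting the vertex `u` into `w`: the vertex `u` stays in `V`, but isolated. -/
def contractVertex : (V → R) →ₗ[R] V → R :=
  LinearMap.id - (LinearMap.proj u).smulRight (Pi.single u 1 - Pi.single w 1)

lemma contractVertex_apply (f : V → R) :
    contractVertex R u w f = f - f u • (Pi.single u 1 - Pi.single w 1) := rfl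

lemma contractVertex_single (x : V) :
    contractVertex R u w (Pi.single x 1) = Pi.single (Function.update id u w x) 1 := by
  ext y
  by_cases hx : x = u
  · subst hx
    simp [contractVertex_apply]
  · simp [contractVertex_apply, hx, Function.update_of_ne]

lemma contractVertex_incVec (src tgt : E → V) (e : E) :
    contractVertex R u w (incVec R src tgt e) =
      incVec R (Function.update id u w ∘ src) (Function.update id u w ∘ tgt) e := by
  simp only [incVec, map_sub, contractVertex_single, Function.comp_apply]

variable {u w}

lemma single_sub_single_ne_zero [Nontrivial R] (huw : u ≠ w) :
    (Pi.single u 1 - Pi.single w 1 : V → R) ≠ 0 := fun h => by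
  simpa [huw] using congrFun h u

lemma ker_contractVertex {K : Type*} [Field K] (huw : u ≠ w) :
    LinearMap.ker (contractVertex K u w) = K ∙ (Pi.single u 1 - Pi.single w 1) := by
  ext f
  rw [LinearMap.mem_ker, Submodule.mem_span_singleton, contractVertex_apply, sub_eq_zero]
  constructor
  · intro h
    exact ⟨f u, h.symm⟩
  · rintro ⟨a, rfl⟩
    simp [huw]

end Contraction

lemma linearIndepOn_insert_iff_contractVertex {e : E} {B : Set E} (he : e ∉ B)
    (hloop : src e ≠ tgt e) :
    LinearIndepOn ℚ (incVec ℚ src tgt) (insert e B) ↔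
      LinearIndepOn ℚ (incVec ℚ (Function.update id (src e) (tgt e) ∘ src)
        (Function.update id (src e) (tgt e) ∘ tgt)) B := by
  have : incVec ℚ (Function.update id (src e) (tgt e) ∘ src)
      (Function.update id (src e) (tgt e) ∘ tgt) =
        contractVertex ℚ (src e) (tgt e) ∘ incVec ℚ src tgt :=
    funext fun e' => (contractVertex_incVec ℚ _ _ src tgt e').symm
  rw [this, linearIndepOn_comp_iff_of_ker_eq_span_singleton
    (single_sub_single_ne_zero ℚ hloop) (ker_contractVertex hloop), linearIndepOn_insert he]
  rfl

def boundary (src tgt : E → V) (A : Finset E) : V → ℤ :=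
  ∑ e ∈ A, incVec ℤ src tgt e

lemma contractVertex_boundary (u w : V) (A : Finset E) :
    contractVertex ℤ u w (boundary src tgt A) =
      boundary (Function.update id u w ∘ src) (Function.update id u w ∘ tgt) A := by
  simp only [boundary, map_sum, contractVertex_incVec]

section Augmentation

variable [DecidableEq E]

lemma boundary_insert {e : E} {A : Finset E} (he : e ∉ A) :
    boundary src tgt (insert e A) = boundary src tgt A + incVec ℤ src tgt e := by
  rw [boundary, sum_insert he, add_comm, boundary]

/-- As `∂B - ∂A` is positive at `v`, some edge of `B \ A` leaves `v` or some edge of `A \ B`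
enters it; toggle that edge in `A`. -/
lemma exists_toggle_of_boundary_lt {A B : Finset E} {v : V}
    (hv : boundary src tgt A v < boundary src tgt B v) :
    ∃ A' ⊆ A ∪ B, ∃ v', #(symmDiff A' B) < #(symmDiff A B) ∧
      boundary src tgt A' = boundary src tgt A + Pi.single v 1 - Pi.single v' 1 := by
  have hdiff : boundary src tgt B v - boundary src tgt A v =
      ∑ e ∈ B \ A, incVec ℤ src tgt e v - ∑ e ∈ A \ B, incVec ℤ src tgt e v := by
    simp only [boundary, Finset.sum_apply, Finset.sum_sdiff_sub_sum_sdiff]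
  have : (∃ e ∈ B \ A, src e = v) ∨ (∃ e ∈ A \ B, tgt e = v) := by
    by_contra! h
    have h1 : ∑ e ∈ B \ A, incVec ℤ src tgt e v ≤ 0 := Finset.sum_nonpos fun e he => by
      simp only [incVec, Pi.sub_apply, Pi.single_apply, if_neg (h.1 e he).symm]
      split_ifs <;> norm_num
    have h2 : 0 ≤ ∑ e ∈ A \ B, incVec ℤ src tgt e v := Finset.sum_nonneg fun e he => by
      simp only [incVec, Pi.sub_apply, Pi.single_apply, if_neg (h.2 e he).symm]
      split_ifs <;> norm_num
    omega
  rcases this with ⟨e, he, rfl⟩ | ⟨e, he, rfl⟩ <;> rw [Finset.mem_sdiff] at he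
  · refine ⟨insert e A, insert_subset (mem_union_right _ he.1) subset_union_left, tgt e, ?_, ?_⟩
    · have : symmDiff (insert e A) B = (symmDiff A B).erase e := by
        ext x; simp only [mem_symmDiff, mem_insert, mem_erase]; grind
      rw [this]
      exact card_erase_lt_of_mem (mem_symmDiff.mpr (.inr he))
    · rw [boundary_insert he.2, incVec]; abel
  · refine ⟨A.erase e, (erase_subset _ _).trans subset_union_left, src e, ?_, ?_⟩
    · have : symmDiff (A.erase e) B = (symmDiff A B).erase e := by
        ext x; simp only [mem_symmDiff, mem_erase]; grind
      rw [this]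
      exact card_erase_lt_of_mem (mem_symmDiff.mpr (.inl he))
    · have h := boundary_insert (src := src) (tgt := tgt) (notMem_erase e A)
      rw [insert_erase he.1] at h
      rw [h, incVec]; abel

lemma exists_subset_boundary_eq_add_single_sub_single {A B : Finset E} {c : V → ℤ} {v w : V}
    (hAB : boundary src tgt B = boundary src tgt A + c) (hc : ∀ x, x ≠ w → 0 ≤ c x)
    (hv : 0 < c v) :
    ∃ C ⊆ A ∪ B, boundary src tgt C = boundary src tgt A + Pi.single v 1 - Pi.single w 1 := by
  induction hn : #(symmDiff A B) using Nat.strong_induction_on generalizing A c v with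
  | _ n ih =>
  obtain ⟨A', hA', v', hlt, hA'bd⟩ := exists_toggle_of_boundary_lt (A := A) (B := B) (v := v)
    (by rw [hAB]; simpa using hv)
  by_cases hv' : v' = w
  · exact ⟨A', hA', hv' ▸ hA'bd⟩
  have hAB' : boundary src tgt B =
      boundary src tgt A' + (c - Pi.single v 1 + Pi.single v' 1) := by
    rw [hAB, hA'bd]; abel
  have hc' : ∀ x, x ≠ w → 0 ≤ (c - Pi.single v 1 + Pi.single v' 1 : V → ℤ) x := by
    intro x hx
    have := hc x hx
    simp only [Pi.add_apply, Pi.sub_apply, Pi.single_apply]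
    split_ifs <;> subst_vars <;> omega
  have hv'pos : 0 < (c - Pi.single v 1 + Pi.single v' 1 : V → ℤ) v' := by
    have := hc v' hv'
    simp only [Pi.add_apply, Pi.sub_apply, Pi.single_apply]
    split_ifs <;> subst_vars <;> omega
  obtain ⟨C, hC, hCbd⟩ := ih _ (hn ▸ hlt) hAB' hc' hv'pos rfl
  exact ⟨C, hC.trans (union_subset hA' subset_union_right), by rw [hCbd, hA'bd]; abel⟩

variable [Fintype V]

lemma image_boundary_powerset_insert {S : Finset E} {e : E} (he : e ∉ S) :
    (insert e S).powerset.image (boundary src tgt) =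
      S.powerset.image (boundary src tgt) ∪
        (S.powerset.image (boundary src tgt)).image (· + incVec ℤ src tgt e) := by
  rw [powerset_insert, image_union, image_image, image_image]
  congr 1
  exact image_congr fun t ht => boundary_insert (notMem_mono (mem_powerset.mp ht) he)

lemma add_incVec_mem_image_boundary {S : Finset E} {e : E} (hloop : src e ≠ tgt e) :
    ∀ x ∈ S.powerset.image (boundary src tgt), ∀ k : ℤ, 0 < k →
      x + k • incVec ℤ src tgt e ∈ S.powerset.image (boundary src tgt) →
        x + incVec ℤ src tgt e ∈ S.powerset.image (boundary src tgt) := by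
  intro x hx k hk hxk
  obtain ⟨A, hA, rfl⟩ := mem_image.mp hx
  obtain ⟨B, hB, hAB⟩ := mem_image.mp hxk
  obtain ⟨C, hC, hCbd⟩ := exists_subset_boundary_eq_add_single_sub_single (w := tgt e) hAB
    (fun y hy => by simp [incVec, Pi.single_apply, hy]; split_ifs <;> omega) (v := src e)
    (by simp [incVec, hloop, hk])
  exact mem_image.mpr ⟨C, mem_powerset.mpr
    (hC.trans (union_subset (mem_powerset.mp hA) (mem_powerset.mp hB))),
    by rw [hCbd, incVec, add_sub_assoc]⟩

open Classical in
theorem card_image_boundary_eq_card_linearIndepOn (S : Finset E) (src tgt : E → V) :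
    #(S.powerset.image (boundary src tgt)) =
      #(S.powerset.filter fun A : Finset E => LinearIndepOn ℚ (incVec ℚ src tgt) (A : Set E)) := by
  induction S using Finset.induction_on generalizing src tgt with
  | empty => simp [filter_singleton]
  | insert e S he ih =>
    rw [image_boundary_powerset_insert he, card_filter_powerset_insert he]
    by_cases hloop : src e = tgt e
    · have h0 : incVec ℤ src tgt e = 0 := by simp [incVec, hloop]
      have hdep (B : Finset E) : ¬ LinearIndepOn ℚ (incVec ℚ src tgt) ↑(insert e B) :=
        fun h => h.ne_zero (i := e) (by simp) (by simp [incVec, hloop])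
      rw [filter_false_of_mem fun B _ => hdep B, h0]
      simp [ih]
    · rw [card_union_image_add, card_filter_add_notMem_eq_card_image _
        (Pi.evalAddMonoidHom _ (src e)) (by simp [incVec, hloop])
        (add_incVec_mem_image_boundary hloop), image_image]
      have hcontract : (fun x => x - x (src e) • incVec ℤ src tgt e) ∘ boundary src tgt =
          boundary (Function.update id (src e) (tgt e) ∘ src)
            (Function.update id (src e) (tgt e) ∘ tgt) :=
        funext fun A => contractVertex_boundary (src e) (tgt e) A
      have hindep :
          S.powerset.filter (fun B : Finset E =>
            LinearIndepOn ℚ (incVec ℚ src tgt) ↑(insert e B)) =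
          S.powerset.filter (fun B : Finset E =>
            LinearIndepOn ℚ (incVec ℚ (Function.update id (src e) (tgt e) ∘ src)
              (Function.update id (src e) (tgt e) ∘ tgt)) ↑B) :=
        filter_congr fun B hB => by
          rw [coe_insert, linearIndepOn_insert_iff_contractVertex
            (mt (mem_powerset.mp hB ·) he) hloop]
      simp only [Pi.evalAddMonoidHom_apply]
      rw [hcontract, hindep, ih, ih]

end Augmentation

lemma degIn_eq_of_sym2_eq {src' tgt' : E → V} (h : ∀ e, s(src' e, tgt' e) = s(src e, tgt e)) :
    degIn src' tgt' = degIn src tgt := by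
  ext F v
  simp only [degIn, card_filter, ← sum_add_distrib]
  refine sum_congr rfl fun e _ => ?_
  rcases Sym2.eq_iff.mp (h e) with ⟨h1, h2⟩ | ⟨h1, h2⟩ <;> rw [h1, h2]
  exact add_comm _ _

lemma exists_orientation_of_bipartite {L : Finset V}
    (hbip : ∀ e, (src e ∈ L ∧ tgt e ∉ L) ∨ (src e ∉ L ∧ tgt e ∈ L)) :
    ∃ src' tgt' : E → V, (∀ e, s(src' e, tgt' e) = s(src e, tgt e)) ∧
      (∀ e, src' e ∈ L) ∧ ∀ e, tgt' e ∉ L := by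
  refine ⟨fun e => if src e ∈ L then src e else tgt e,
    fun e => if src e ∈ L then tgt e else src e, fun e => ?_, fun e => ?_, fun e => ?_⟩ <;>
    rcases hbip e with ⟨h1, h2⟩ | ⟨h1, h2⟩ <;> simp [h1, h2, Sym2.eq_swap]

lemma boundary_eq_signed_degIn {L : Finset V} (hsrc : ∀ e, src e ∈ L) (htgt : ∀ e, tgt e ∉ L)
    (F : Finset E) :
    boundary src tgt F = fun v =>
      if v ∈ L then (degIn src tgt F v : ℤ) else -degIn src tgt F v := by
  ext v
  simp only [boundary, incVec, Finset.sum_apply, Pi.sub_apply, Pi.single_apply, sum_sub_distrib,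
    degIn, card_filter]
  push_cast
  simp_rw [eq_comm (a := v)]
  split_ifs with hv
  · have : ∀ e, tgt e ≠ v := fun e h => htgt e (h ▸ hv)
    simp [this]
  · have : ∀ e, src e ≠ v := fun e h => hv (h ▸ hsrc e)
    simp [this]

lemma card_range_degIn_eq_card_image_boundary [Fintype V] [Fintype E] {L : Finset V}
    (hsrc : ∀ e, src e ∈ L) (htgt : ∀ e, tgt e ∉ L) :
    Nat.card (Set.range (degIn src tgt)) = #(univ.image (boundary src tgt)) := by
  let sign : (V → ℕ) → V → ℤ := fun g v => if v ∈ L then (g v : ℤ) else -g v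
  have hsign : Function.Injective sign := fun g g' h => funext fun v => by
    have := congrFun h v
    simp only [sign] at this
    split_ifs at this <;> omega
  have himage : univ.image (boundary src tgt) = (univ.image (degIn src tgt)).image sign := by
    rw [image_image]
    exact image_congr fun F _ => boundary_eq_signed_degIn hsrc htgt F
  rw [himage, card_image_of_injective _ hsign, ← Set.ncard_coe_finset, coe_image, coe_univ,
    Set.image_univ, Nat.card_coe_set_eq]

end Multigraph

/-- For a bipartite multigraph `G`, the number of distinct degree sequences of
spanning subgraphs of `G` equals `T_G(2,1)`. -/
theorem stmt_14 [Fintype V] [Fintype E] [DecidableEq V] [DecidableEq E]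
    (src tgt : E → V) (L : Finset V)
    (hbip : ∀ e, (src e ∈ L ∧ tgt e ∉ L) ∨ (src e ∉ L ∧ tgt e ∈ L)) :
    (Nat.card (Set.range fun F : Finset E => degIn src tgt F) : ℤ) =
      tutteEval (fun e => s(src e, tgt e)) 2 1 := by
  obtain ⟨src', tgt', hsym, hsrc, htgt⟩ := exists_orientation_of_bipartite hbip
  have hends : (fun e => s(src e, tgt e)) = fun e => s(src' e, tgt' e) :=
    funext fun e => (hsym e).symm
  rw [← degIn_eq_of_sym2_eq hsym, hends, card_range_degIn_eq_card_image_boundary hsrc htgt,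
    tutteEval_two_one_eq_card_linearIndepOn, ← powerset_univ,
    card_image_boundary_eq_card_linearIndepOn]
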